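/- arXiv:1508.01717 — 2 statements merged into one kernel-verified Lean document; each statement's English description precedes it below -/
import Mathlib

section
/- Let G be a bow-free acyclic path diagram (BAP) on d vertices, with directed-edge weight matrix B supported on the directed edges of G and symmetric matrix Ω supported on the bidirected edges of G (plus arbitrary diagonal). If (I − B)^{-1} Ω (I − B)^{-T} = I, then B = 0 and Ω = I. -/
/-!
Since `(I - B)⁻¹ Ω (I - B)⁻ᵀ = I`, we get `Ω = (I - B)(I - B)ᵀ`. Go through the vertices in
topological order. If `k → x` and row `k` of `B` already vanishes, row `k` of `I - B` is the unit
vector `e_k`, so `Ω x k = ((I - B)(I - B)ᵀ) x k = -B x k`; bow-freeness forces `Ω x k = 0`, hence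
`B x k = 0`. Thus `B = 0`, and then `Ω = I`.
-/

open Matrix

theorem Relation.TransGen.exists_path {α : Type*} {r : α → α → Prop} {a b : α}
    (h : Relation.TransGen r a b) :
    ∃ (l : ℕ) (v : ℕ → α), 0 < l ∧ v 0 = a ∧ v l = b ∧ ∀ k < l, r (v k) (v (k + 1)) := by
  induction h with
  | single hab => exact ⟨1, fun k => if k = 0 then a else _, one_pos, rfl, rfl, by simpa⟩
  | @tail b c _ hbc ih =>
    obtain ⟨l, v, hl, hv0, hvl, hstep⟩ := ih
    refine ⟨l + 1, fun k => if k ≤ l then v k else c, l.succ_pos, by simpa, by simp, ?_⟩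
    intro k hk
    rcases Nat.lt_succ_iff_lt_or_eq.mp hk with hkl | rfl
    · simpa [hkl.le, Nat.succ_le_of_lt hkl] using hstep k hkl
    · simpa [hvl] using hbc

theorem wellFounded_of_forall_path_ne {α : Type*} [Finite α] {r : α → α → Prop}
    (hacyc : ∀ (l : ℕ) (v : ℕ → α), 0 < l → (∀ k < l, r (v k) (v (k + 1))) → v 0 ≠ v l) :
    WellFounded r := by
  have : Std.Irrefl (Relation.TransGen r) := ⟨fun a h => by
    obtain ⟨l, v, hl, hv0, hvl, hstep⟩ := h.exists_path
    exact hacyc l v hl hstep (hv0.trans hvl.symm)⟩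
  exact Subrelation.wf Relation.TransGen.single (Finite.wellFounded_of_trans_of_irrefl _)

namespace Matrix

variable {n R : Type*} [Fintype n] [DecidableEq n]

theorem eq_mul_transpose_of_inv_mul_mul_inv_transpose_eq_one [CommRing R] {A Ω : Matrix n n R}
    (h : A⁻¹ * Ω * A⁻¹ᵀ = 1) : Ω = A * Aᵀ := by
  have hA : IsUnit A.det :=
    isUnit_nonsing_inv_det_iff.mp <|
      isUnit_det_of_right_inverse (B := Ω * A⁻¹ᵀ) (by rwa [← Matrix.mul_assoc])
  calc Ω = (A * A⁻¹) * Ω * (A⁻¹ᵀ * Aᵀ) := by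
        rw [← transpose_mul, mul_nonsing_inv A hA, transpose_one, Matrix.one_mul,
          Matrix.mul_one]
    _ = A * (A⁻¹ * Ω * A⁻¹ᵀ) * Aᵀ := by simp only [Matrix.mul_assoc]
    _ = A * Aᵀ := by rw [h, Matrix.mul_one]

theorem one_sub_mul_transpose_apply_of_row_eq_zero [Ring R] {B : Matrix n n R} {x k : n}
    (hk : ∀ m, B k m = 0) (hxk : x ≠ k) : ((1 - B) * (1 - B)ᵀ : Matrix n n R) x k = -B x k := by
  simp [mul_apply, hk, one_apply, hxk]

theorem eq_zero_of_one_sub_mul_transpose_apply_eq_zero [Ring R] {r : n → n → Prop}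
    (hwf : WellFounded r) {B : Matrix n n R} (hB : ∀ i j, ¬ r j i → B i j = 0)
    (hedge : ∀ i j, r j i → ((1 - B) * (1 - B)ᵀ : Matrix n n R) i j = 0) : B = 0 := by
  have hrow : ∀ i j, B i j = 0 := fun i =>
    hwf.induction (C := fun x => ∀ j, B x j = 0) i fun x ih k => by
      by_cases hkx : r k x
      · have hxk : x ≠ k := by rintro rfl; exact hwf.irrefl.irrefl x hkx
        have hzero := hedge x k hkx
        rwa [one_sub_mul_transpose_apply_of_row_eq_zero (ih k hkx) hxk, neg_eq_zero] at hzero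
      · exact hB x k hkx
  exact Matrix.ext hrow

end Matrix

theorem bap_identifiable_at_identity_general {d : ℕ}
    (Gd Gb : Fin d → Fin d → Prop)
    (hacyc : ∀ (l : ℕ) (v : ℕ → Fin d), 0 < l → (∀ k < l, Gd (v k) (v (k + 1))) →
      v 0 ≠ v l)
    (hbowfree : ∀ i j, (Gd i j ∨ Gd j i) → ¬ Gb i j)
    (B Ω : Matrix (Fin d) (Fin d) ℝ)
    (hB : ∀ i j, ¬ Gd j i → B i j = 0)
    (hΩ : ∀ i j, i ≠ j → ¬ Gb i j → Ω i j = 0)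
    (hSigma : (1 - B)⁻¹ * Ω * ((1 - B)⁻¹)ᵀ = 1) :
    B = 0 ∧ Ω = 1 := by
  have hwf : WellFounded Gd := wellFounded_of_forall_path_ne hacyc
  have hΩeq : Ω = (1 - B) * (1 - B)ᵀ := eq_mul_transpose_of_inv_mul_mul_inv_transpose_eq_one hSigma
  have hB0 : B = 0 := eq_zero_of_one_sub_mul_transpose_apply_eq_zero hwf hB fun i j hji => by
    have hij : i ≠ j := by rintro rfl; exact hwf.irrefl.irrefl i hji
    rw [← hΩeq]
    exact hΩ i j hij (hbowfree i j (Or.inr hji))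
  exact ⟨hB0, by simp [hΩeq, hB0]⟩

/-- Parameter identifiability of a BAP at `Σ = I`.  Let `Gd` be the directed edges
(`Gd a b` means `a → b`) and `Gb` the bidirected edges (symmetric, irreflexive) of a
bow-free acyclic path diagram on `d` vertices.  Let `B` be supported on the directed
edges (`B i j = 0` unless `j → i`), and `Ω` symmetric with off-diagonal support on the
bidirected edges.  If `(I - B)⁻¹ Ω (I - B)⁻ᵀ = I`, then `B = 0` and `Ω = I`. -/
theorem bap_identifiable_at_identity {d : ℕ}
    (Gd Gb : Fin d → Fin d → Prop)
    (hGbsymm : ∀ i j, Gb i j → Gb j i)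
    (hGbirr : ∀ i, ¬ Gb i i)
    (hacyc : ∀ (l : ℕ) (v : ℕ → Fin d), 0 < l → (∀ k < l, Gd (v k) (v (k + 1))) →
      v 0 ≠ v l)
    (hbowfree : ∀ i j, (Gd i j ∨ Gd j i) → ¬ Gb i j)
    (B Ω : Matrix (Fin d) (Fin d) ℝ)
    (hB : ∀ i j, ¬ Gd j i → B i j = 0)
    (hΩsymm : Ωᵀ = Ω)
    (hΩ : ∀ i j, i ≠ j → ¬ Gb i j → Ω i j = 0)
    (hSigma : (1 - B)⁻¹ * Ω * ((1 - B)⁻¹)ᵀ = 1) :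
    B = 0 ∧ Ω = 1 :=
  bap_identifiable_at_identity_general Gd Gb hacyc hbowfree B Ω hB hΩ hSigma
end

section
/- Let G be a (possibly cyclic) path diagram on d nodes, B supported on directed edges of G with all eigenvalues of modulus < 1, and Ω symmetric supported on bidirected edges (plus diagonal). Writing φ = (I−B)^{-1} Ω (I−B)^{-T}, for all integers k, l ≥ 0 one has (B^k Ω (B^l)^T)_{ij} = Σ_{τ} c(τ; B, Ω) + Ω_{ii} 𝟙{i = j, k = l = 0}, where the sum is over all treks τ from i to j whose left side has length k and right side has length l, and c(τ; B, Ω) is the product over directed edges s→t of τ of B_{ts} times the product over bidirected edges s↔t of Ω_{st} times Ω_{H_τ H_τ} if τ has no bidirected edge (head H_τ). -/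
open Matrix BigOperators

/-- `IsTrek Gd Gb k l i j vL vR`: `(vL, vR)` is a trek from `i` to `j` with left side of
length `k` and right side of length `l` in the path diagram with directed edges `Gd`
(`Gd a b` means `a → b`) and bidirected edges `Gb`.  The left side is a directed path
from the source `vL 0` to `vL (last k) = i`, the right side from `vR 0` to
`vR (last l) = j`, and the two sources either coincide (common head; the totally empty
trek with `k = l = 0` is excluded) or are joined by a bidirected edge. -/
def IsTrek {d : ℕ} (Gd Gb : Fin d → Fin d → Prop) (k l : ℕ) (i j : Fin d)
    (vL : Fin (k + 1) → Fin d) (vR : Fin (l + 1) → Fin d) : Prop :=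
  vL (Fin.last k) = i ∧ vR (Fin.last l) = j ∧
    (∀ s : Fin k, Gd (vL s.castSucc) (vL s.succ)) ∧
    (∀ s : Fin l, Gd (vR s.castSucc) (vR s.succ)) ∧
    ((vL 0 = vR 0 ∧ ¬(k = 0 ∧ l = 0)) ∨ Gb (vL 0) (vR 0))


instance {d : ℕ} (Gd Gb : Fin d → Fin d → Prop) [DecidableRel Gd] [DecidableRel Gb]
    (k l : ℕ) (i j : Fin d) :
    DecidablePred (fun p : (Fin (k + 1) → Fin d) × (Fin (l + 1) → Fin d) =>
      IsTrek Gd Gb k l i j p.1 p.2) := fun p => by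
  unfold IsTrek; infer_instance

/-- The contribution `c(τ; B, Ω)` of a trek: the product of the directed edge weights
`B t s` over the edges `s → t` of both sides, times `Ω (vL 0) (vR 0)` — which is the
bidirected edge weight `Ω_{st}` if the trek contains a bidirected edge, and the head
variance `Ω_{H_τ H_τ}` otherwise. -/
noncomputable def trekWeight {d : ℕ} (B Ω : Matrix (Fin d) (Fin d) ℝ) (k l : ℕ)
    (vL : Fin (k + 1) → Fin d) (vR : Fin (l + 1) → Fin d) : ℝ :=
  (∏ s : Fin k, B (vL s.succ) (vL s.castSucc)) *
    (∏ s : Fin l, B (vR s.succ) (vR s.castSucc)) * Ω (vL 0) (vR 0)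

/-! Expanding `(B ^ k) i a` as a sum over directed walks of length `k` from `a` to `i`, weighted
by the product of their `B`-entries, writes `(B ^ k * Ω * (B ^ l)ᵀ) i j` as the sum of the trek
weights of all pairs of walks ending at `i` and `j`. A pair that is not a trek contributes zero:
either one of its steps is a non-edge, where `B` vanishes, or its sources are distinct and not
joined by a bidirected edge, where `Ω` vanishes. The one exception is the pair of constant walks
when `i = j` and `k = l = 0`, which contributes `Ω i i`. -/

namespace Matrix

variable {n R : Type*} [CommSemiring R]

def walkWeight (B : Matrix n n R) {k : ℕ} (v : Fin (k + 1) → n) : R :=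
  ∏ s : Fin k, B (v s.succ) (v s.castSucc)

theorem walkWeight_cons (B : Matrix n n R) {k : ℕ} (a : n) (v : Fin (k + 1) → n) :
    walkWeight B (Fin.cons a v : Fin (k + 2) → n) = walkWeight B v * B (v 0) a := by
  simp only [walkWeight, Fin.prod_univ_succ, Fin.cons_succ, Fin.castSucc_zero, Fin.cons_zero,
    ← Fin.succ_castSucc]
  ring

theorem walkWeight_eq_zero_of_not_adj {G : n → n → Prop} {B : Matrix n n R}
    (hB : ∀ a b, ¬ G b a → B a b = 0) {k : ℕ} {v : Fin (k + 1) → n} {s : Fin k}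
    (hs : ¬ G (v s.castSucc) (v s.succ)) : walkWeight B v = 0 :=
  Finset.prod_eq_zero (Finset.mem_univ s) (hB _ _ hs)

variable [Fintype n] [DecidableEq n]

theorem pow_mulVec_apply_eq_sum_walks (B : Matrix n n R) (k : ℕ) (f : n → R) (i : n) :
    (B ^ k *ᵥ f) i = ∑ v : Fin (k + 1) → n with v (Fin.last k) = i, walkWeight B v * f (v 0) := by
  induction k generalizing f with
  | zero =>
    rw [pow_zero, one_mulVec, Finset.sum_filter, ← (Equiv.funUnique (Fin 1) n).symm.sum_comp]
    simp [walkWeight]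
  | succ k ih =>
    rw [pow_succ, ← mulVec_mulVec, ih, Finset.sum_filter, Finset.sum_filter]
    conv_rhs => rw [← (Fin.consEquiv fun _ => n).sum_comp, Fintype.sum_prod_type, Finset.sum_comm]
    refine Finset.sum_congr rfl fun v _ => ?_
    simp only [Fin.consEquiv_apply, Fin.cons_last, Fin.cons_zero]
    split_ifs
    · simp only [mulVec, dotProduct, Finset.mul_sum]
      exact Finset.sum_congr rfl fun a _ => by rw [← mul_assoc, ← walkWeight_cons]; rfl
    · simp

theorem pow_mul_mul_transpose_pow_apply_eq_sum_walks (B Ω : Matrix n n R) (k l : ℕ) (i j : n) :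
    (B ^ k * Ω * (B ^ l)ᵀ) i j =
      ∑ p : (Fin (k + 1) → n) × (Fin (l + 1) → n) with
          p.1 (Fin.last k) = i ∧ p.2 (Fin.last l) = j,
        walkWeight B p.1 * walkWeight B p.2 * Ω (p.1 0) (p.2 0) := by
  have hleft : ∀ b, (B ^ k * Ω) i b = (B ^ k *ᵥ fun a => Ω a b) i := fun b => rfl
  have hright : (B ^ k * Ω * (B ^ l)ᵀ) i j = (B ^ l *ᵥ fun b => (B ^ k * Ω) i b) j := by
    simp only [mul_apply, mulVec, dotProduct, transpose_apply, mul_comm]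
  rw [hright, pow_mulVec_apply_eq_sum_walks]
  simp only [hleft, pow_mulVec_apply_eq_sum_walks, Finset.mul_sum, Finset.sum_filter]
  rw [Fintype.sum_prod_type, Finset.sum_comm]
  refine Finset.sum_congr rfl fun vR _ => ?_
  by_cases hR : vR (Fin.last l) = j
  · simp only [hR, if_true, and_true]
    exact Finset.sum_congr rfl fun vL _ => by split_ifs <;> ring
  · simp [hR]


end Matrix

section Treks

variable {d : ℕ} {Gd Gb : Fin d → Fin d → Prop} {B Ω : Matrix (Fin d) (Fin d) ℝ} {k l : ℕ}
  {i j : Fin d}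

theorem trekWeight_eq_walkWeight_mul (vL : Fin (k + 1) → Fin d) (vR : Fin (l + 1) → Fin d) :
    trekWeight B Ω k l vL vR = walkWeight B vL * walkWeight B vR * Ω (vL 0) (vR 0) :=
  rfl

theorem trekWeight_eq_zero_of_not_isTrek (hB : ∀ a b, ¬ Gd b a → B a b = 0)
    (hΩ : ∀ a b, a ≠ b → ¬ Gb a b → Ω a b = 0) {vL : Fin (k + 1) → Fin d}
    {vR : Fin (l + 1) → Fin d} (hL : vL (Fin.last k) = i) (hR : vR (Fin.last l) = j)
    (hτ : ¬ IsTrek Gd Gb k l i j vL vR) (hdeg : ¬ (i = j ∧ k = 0 ∧ l = 0)) :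
    trekWeight B Ω k l vL vR = 0 := by
  by_cases hpathL : ∀ s : Fin k, Gd (vL s.castSucc) (vL s.succ)
  swap
  · obtain ⟨s, hs⟩ := not_forall.mp hpathL
    rw [trekWeight_eq_walkWeight_mul, walkWeight_eq_zero_of_not_adj hB hs, zero_mul, zero_mul]
  by_cases hpathR : ∀ s : Fin l, Gd (vR s.castSucc) (vR s.succ)
  swap
  · obtain ⟨s, hs⟩ := not_forall.mp hpathR
    rw [trekWeight_eq_walkWeight_mul, walkWeight_eq_zero_of_not_adj hB hs, mul_zero, zero_mul]
  have hsrc : vL 0 ≠ vR 0 := by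
    intro hsrc
    obtain ⟨rfl, rfl⟩ : k = 0 ∧ l = 0 :=
      not_not.mp fun hkl => hτ ⟨hL, hR, hpathL, hpathR, Or.inl ⟨hsrc, hkl⟩⟩
    exact hdeg ⟨hL ▸ hR ▸ hsrc, rfl, rfl⟩
  have hGb : ¬ Gb (vL 0) (vR 0) := fun hGb => hτ ⟨hL, hR, hpathL, hpathR, Or.inr hGb⟩
  rw [trekWeight_eq_walkWeight_mul, hΩ _ _ hsrc hGb, mul_zero]

theorem sum_trekWeight_filter_not_isTrek [DecidableRel Gd] [DecidableRel Gb]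
    (hGbirr : ∀ a, ¬ Gb a a) (hB : ∀ a b, ¬ Gd b a → B a b = 0) (hΩ : ∀ a b, a ≠ b → ¬ Gb a b → Ω a b = 0) :
    ∑ p : (Fin (k + 1) → Fin d) × (Fin (l + 1) → Fin d) with
        (p.1 (Fin.last k) = i ∧ p.2 (Fin.last l) = j) ∧ ¬ IsTrek Gd Gb k l i j p.1 p.2,
      trekWeight B Ω k l p.1 p.2 =
    if i = j ∧ k = 0 ∧ l = 0 then Ω i i else 0 := by
  split_ifs with hdeg
  · obtain ⟨rfl, rfl, rfl⟩ := hdeg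
    -- the only candidate pair is the constant one, not a trek since `Gb` is irreflexive
    have hconst : ∀ v : Fin 1 → Fin d, v (Fin.last 0) = i → v = fun _ => i := fun v hv =>
      funext fun s => Subsingleton.elim s (Fin.last 0) ▸ hv
    rw [Finset.sum_eq_single_of_mem (fun _ => i, fun _ => i)]
    · simp [trekWeight]
    · simp [Finset.mem_filter, IsTrek, hGbirr]
    · rintro ⟨vL, vR⟩ hp hne
      simp only [Finset.mem_filter] at hp
      exact absurd (Prod.ext (hconst vL hp.2.1.1) (hconst vR hp.2.1.2)) hne
  · refine Finset.sum_eq_zero fun p hp => ?_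
    simp only [Finset.mem_filter] at hp
    exact trekWeight_eq_zero_of_not_isTrek hB hΩ hp.2.1.1 hp.2.1.2 hp.2.2 hdeg

end Treks

theorem pow_mul_omega_mul_pow_transpose_entry_eq_sum_treks_general {d : ℕ}
    (Gd Gb : Fin d → Fin d → Prop) [DecidableRel Gd] [DecidableRel Gb]
    (hGbirr : ∀ i, ¬ Gb i i)
    (B Ω : Matrix (Fin d) (Fin d) ℝ)
    (hB : ∀ i j, ¬ Gd j i → B i j = 0)
    (hΩ : ∀ i j, i ≠ j → ¬ Gb i j → Ω i j = 0)
    (k l : ℕ) (i j : Fin d) :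
    (B ^ k * Ω * ((B ^ l)ᵀ)) i j =
      (∑ τ : {p : (Fin (k + 1) → Fin d) × (Fin (l + 1) → Fin d) //
                IsTrek Gd Gb k l i j p.1 p.2},
          trekWeight B Ω k l τ.1.1 τ.1.2) +
        (if i = j ∧ k = 0 ∧ l = 0 then Ω i i else 0) := by
  rw [pow_mul_mul_transpose_pow_apply_eq_sum_walks,
    ← Finset.sum_filter_add_sum_filter_not _ fun p => IsTrek Gd Gb k l i j p.1 p.2]
  simp only [Finset.filter_filter, ← trekWeight_eq_walkWeight_mul]
  rw [sum_trekWeight_filter_not_isTrek hGbirr hB hΩ]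
  congr 1
  refine Finset.sum_subtype _ (fun p => ?_) _
  simp only [Finset.mem_filter, Finset.mem_univ, true_and, and_iff_right_iff_imp]
  exact fun hτ => ⟨hτ.1, hτ.2.1⟩

/-- Trek-expansion of the summands of the Neumann series: for a (possibly cyclic) path
diagram with directed edges `Gd` and bidirected edges `Gb`, `B` supported on the
directed edges with all eigenvalues of modulus `< 1`, and `Ω` symmetric supported on
the bidirected edges plus diagonal, for all `k, l ≥ 0`,
`(B^k Ω (B^l)ᵀ) i j = ∑_τ c(τ; B, Ω) + Ω i i · 𝟙{i = j, k = l = 0}`,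
summing over all treks from `i` to `j` with left length `k` and right length `l`. -/
theorem pow_mul_omega_mul_pow_transpose_entry_eq_sum_treks {d : ℕ}
    (Gd Gb : Fin d → Fin d → Prop) [DecidableRel Gd] [DecidableRel Gb]
    (hGbsymm : ∀ i j, Gb i j → Gb j i) (hGbirr : ∀ i, ¬ Gb i i)
    (B Ω : Matrix (Fin d) (Fin d) ℝ)
    (hB : ∀ i j, ¬ Gd j i → B i j = 0)
    (hspec : ∀ μ ∈ spectrum ℂ (B.map (Complex.ofReal)), ‖μ‖ < 1)
    (hΩsymm : Ωᵀ = Ω)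
    (hΩ : ∀ i j, i ≠ j → ¬ Gb i j → Ω i j = 0)
    (k l : ℕ) (i j : Fin d) :
    (B ^ k * Ω * ((B ^ l)ᵀ)) i j =
      (∑ τ : {p : (Fin (k + 1) → Fin d) × (Fin (l + 1) → Fin d) //
                IsTrek Gd Gb k l i j p.1 p.2},
          trekWeight B Ω k l τ.1.1 τ.1.2) +
        (if i = j ∧ k = 0 ∧ l = 0 then Ω i i else 0) :=
  pow_mul_omega_mul_pow_transpose_entry_eq_sum_treks_general Gd Gb hGbirr B Ω hB hΩ k l i j
end
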